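/- arXiv:2212.03328 — 2 statements merged into one kernel-verified Lean document; each statement's English description precedes it below -/
import Mathlib

section
/- Let n, m ≥ 2 and let v_1, …, v_m ∈ ℝ^n be unit vectors (‖v_ℓ‖_2 = 1). Let P be the random-bias vector P := (1/(10√(m log n))) ∑_{ℓ=1}^m ∑_{j ∈ J_ℓ} α_{ℓj} 2^j v_ℓ^{(j)}, where v_ℓ = ∑_{j∈J_ℓ} v_ℓ^{(j)} is the binary decomposition of v_ℓ and the α_{ℓj} are independent random variables uniformly distributed on [-1,1]. Then Pr[‖P‖_∞ > 1/2] ≤ 2/n. -/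
open MeasureTheory
open scoped Classical

/-- The dyadic class `K(j)` of the binary decomposition of `v`: the set of coordinates
`k` with `2^{-j-1} < |v k| ≤ 2^{-j}`. -/
noncomputable def binClass {n : ℕ} (v : Fin n → ℝ) (j : ℤ) : Finset (Fin n) :=
  Finset.univ.filter fun k => (2 : ℝ) ^ (-j - 1) < |v k| ∧ |v k| ≤ (2 : ℝ) ^ (-j)

/-- The index set `J` of the binary decomposition of `v`: those `j` with `K(j) ≠ ∅`. -/
def binIdx {n : ℕ} (v : Fin n → ℝ) : Set ℤ := {j | (binClass v j).Nonempty}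

/-- The piece `v^{(j)}` of the binary decomposition of `v`: it agrees with `v` on `K(j)`
and vanishes elsewhere, so that `v = ∑_{j ∈ J} v^{(j)}`. -/
noncomputable def binComp {n : ℕ} (v : Fin n → ℝ) (j : ℤ) : Fin n → ℝ :=
  fun k => if k ∈ binClass v j then v k else 0

/-- The uniform probability measure on the interval `[-1, 1] ⊂ ℝ`. -/
noncomputable def unifInterval : Measure ℝ :=
  (2⁻¹ : ENNReal) • volume.restrict (Set.Icc (-1 : ℝ) 1)

/-- A realization of the family `α = (α_{ℓ j})_{ℓ ∈ [m], j ∈ ℤ}` from a finite array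
`ω ∈ ℝ^{m × n}`: `α_{ℓ j} := ω_{ℓ k(j)}` where `k(j)` is a fixed representative of the
dyadic class `K_ℓ(j)` of `v_ℓ` (and `α_{ℓ j} := 0` for the irrelevant indices
`j ∉ J_ℓ`). Since the classes `K_ℓ(j)`, `j ∈ J_ℓ`, are pairwise disjoint, pushing
forward a product of uniform measures on `[-1,1]` by this map makes the variables
`α_{ℓ j}`, `ℓ ∈ [m]`, `j ∈ J_ℓ`, independent and uniform on `[-1,1]`. -/
noncomputable def alphaOf {n m : ℕ} (v : Fin m → Fin n → ℝ) (ω : Fin m → Fin n → ℝ) :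
    Fin m → ℤ → ℝ :=
  fun ℓ j => if h : (binClass (v ℓ) j).Nonempty then ω ℓ ((binClass (v ℓ) j).min' h) else 0

/-- The joint distribution of the coefficients `α_{ℓ j}` in Definition 2.2: the
`α_{ℓ j}`, `ℓ ∈ [m]`, `j ∈ J_ℓ`, are independent, uniformly distributed on `[-1,1]`. -/
noncomputable def alphaMeasure (n m : ℕ) (v : Fin m → Fin n → ℝ) :
    Measure (Fin m → ℤ → ℝ) :=
  Measure.map (alphaOf v) (Measure.pi fun _ : Fin m => Measure.pi fun _ : Fin n => unifInterval)

/-- The random bias vector of Definition 2.2: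
`P(α) = (1/(10√(m log n))) ∑_{ℓ=1}^m ∑_{j ∈ J_ℓ} α_{ℓ j} 2^j v_ℓ^{(j)}`,
where `v_ℓ = ∑_{j ∈ J_ℓ} v_ℓ^{(j)}` is the binary decomposition of `v_ℓ`.
(The sum over `j` is a `finsum`: all but finitely many terms vanish, since `v_ℓ^{(j)} = 0`
for `j ∉ J_ℓ`.) -/
noncomputable def biasP (n m : ℕ) (v : Fin m → Fin n → ℝ) (a : Fin m → ℤ → ℝ) :
    Fin n → ℝ :=
  fun k => (10 * Real.sqrt (m * Real.log n))⁻¹ *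
    ∑ ℓ, ∑ᶠ j : ℤ, a ℓ j * (2 : ℝ) ^ j * binComp (v ℓ) j k

/-- The biased product measure `μ_p` on `{-1,1}^n ⊂ ℝ^n`: coordinates are independent,
with `Pr[x i = 1] = (1 + p i)/2` and `Pr[x i = -1] = (1 - p i)/2`. -/
noncomputable def cubeMeasure {n : ℕ} (p : Fin n → ℝ) : Measure (Fin n → ℝ) :=
  Measure.pi fun i =>
    ENNReal.ofReal ((1 + p i) / 2) • Measure.dirac (1 : ℝ) +
      ENNReal.ofReal ((1 - p i) / 2) • Measure.dirac (-1 : ℝ)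

/-- The joint distribution of `(P, x)`, where `P` is the random bias vector of
Definition 2.2 (parametrized by `α`), conditioned on `‖P‖_∞ ≤ 1/2`, and, given `P`,
`x ~ μ_P`. -/
noncomputable def biasJoint (n m : ℕ) (v : Fin m → Fin n → ℝ) :
    Measure ((Fin m → ℤ → ℝ) × (Fin n → ℝ)) :=
  (ProbabilityTheory.cond (alphaMeasure n m v) {a | ∀ k, |biasP n m v a k| ≤ 1 / 2}).bind
    fun a => (cubeMeasure (biasP n m v a)).map (Prod.mk a)


/-! At a coordinate `k` only the piece of `v_ℓ` whose dyadic class contains `k` contributes, so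
`P_k = c⁻¹ ∑_ℓ α_{ℓ j_ℓ} 2^{j_ℓ} v_{ℓ k}` with `c = 10 √(m log n)` and `j_ℓ` the dyadic index of
`v_{ℓ k}`. This is a sum of `m` independent centred variables bounded by `1` in absolute value,
since `2^{j} |x| ≤ 1` whenever `|x| ≤ 2^{-j}`. Hoeffding's inequality gives
`Pr[|P_k| > 1/2] ≤ 2 exp(-(c/2)² / 2m) = 2 n^{-25/2}`, and a union bound over the `n` coordinates
finishes the proof. -/

open ProbabilityTheory

noncomputable def dyadicIndex (x : ℝ) : ℤ := -Int.clog 2 |x|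

lemma dyadicIndex_spec {x : ℝ} (hx : x ≠ 0) :
    (2 : ℝ) ^ (-dyadicIndex x - 1) < |x| ∧ |x| ≤ (2 : ℝ) ^ (-dyadicIndex x) := by
  have hpos : 0 < |x| := abs_pos.mpr hx
  simpa [dyadicIndex] using
    And.intro (Int.zpow_pred_clog_lt_self one_lt_two hpos) (Int.self_le_zpow_clog one_lt_two |x|)

lemma abs_zpow_dyadicIndex_mul_le_one (x : ℝ) : |(2 : ℝ) ^ dyadicIndex x * x| ≤ 1 := by
  rcases eq_or_ne x 0 with rfl | hx
  · simp
  calc |(2 : ℝ) ^ dyadicIndex x * x| = (2 : ℝ) ^ dyadicIndex x * |x| := by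
        rw [abs_mul, abs_of_pos (by positivity)]
    _ ≤ (2 : ℝ) ^ dyadicIndex x * (2 : ℝ) ^ (-dyadicIndex x) := by
        gcongr; exact (dyadicIndex_spec hx).2
    _ = 1 := by rw [← zpow_add₀ two_ne_zero, add_neg_cancel, zpow_zero]

lemma eq_of_zpow_two_bounds {t : ℝ} {j j' : ℤ}
    (h : (2 : ℝ) ^ (-j - 1) < t ∧ t ≤ (2 : ℝ) ^ (-j))
    (h' : (2 : ℝ) ^ (-j' - 1) < t ∧ t ≤ (2 : ℝ) ^ (-j')) : j = j' := by
  by_contra hne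
  rcases lt_or_gt_of_ne hne with hlt | hlt
  · have : (2 : ℝ) ^ (-j') ≤ (2 : ℝ) ^ (-j - 1) := zpow_le_zpow_right₀ one_le_two (by omega)
    linarith [h.1, h'.2]
  · have : (2 : ℝ) ^ (-j) ≤ (2 : ℝ) ^ (-j' - 1) := zpow_le_zpow_right₀ one_le_two (by omega)
    linarith [h.2, h'.1]

lemma mem_binClass_iff {n : ℕ} {v : Fin n → ℝ} {j : ℤ} {k : Fin n} :
    k ∈ binClass v j ↔ v k ≠ 0 ∧ j = dyadicIndex (v k) := by
  simp only [binClass, Finset.mem_filter, Finset.mem_univ, true_and]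
  constructor
  · intro hk
    have hne : v k ≠ 0 := abs_pos.mp ((zpow_pos two_pos _).trans hk.1)
    exact ⟨hne, eq_of_zpow_two_bounds hk (dyadicIndex_spec hne)⟩
  · rintro ⟨hne, rfl⟩
    exact dyadicIndex_spec hne

lemma finsum_mul_binComp {n : ℕ} (b : ℤ → ℝ) (v : Fin n → ℝ) (k : Fin n) :
    ∑ᶠ j, b j * binComp v j k = b (dyadicIndex (v k)) * v k := by
  by_cases hk : v k = 0
  · simp [binComp, hk]
  rw [finsum_eq_single _ (dyadicIndex (v k))]
  · rw [binComp, if_pos (mem_binClass_iff.mpr ⟨hk, rfl⟩)]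
  · intro j hj
    rw [binComp, if_neg fun hmem => hj (mem_binClass_iff.mp hmem).2, mul_zero]

lemma biasP_apply (n m : ℕ) (v : Fin m → Fin n → ℝ) (a : Fin m → ℤ → ℝ) (k : Fin n) :
    biasP n m v a k = (10 * Real.sqrt (m * Real.log n))⁻¹ *
      ∑ ℓ, (2 ^ dyadicIndex (v ℓ k) * v ℓ k) * a ℓ (dyadicIndex (v ℓ k)) := by
  refine congrArg _ (Finset.sum_congr rfl fun ℓ _ => ?_)
  rw [finsum_mul_binComp (fun j => a ℓ j * 2 ^ j)]
  ring

instance : IsProbabilityMeasure unifInterval := by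
  constructor
  simp [unifInterval, Real.volume_Icc, one_add_one_eq_two, ENNReal.inv_mul_cancel]

lemma ae_abs_le_one_unifInterval : ∀ᵐ u ∂unifInterval, |u| ≤ 1 := by
  rw [unifInterval]
  exact Measure.ae_smul_measure ((ae_restrict_mem measurableSet_Icc).mono
    fun u (hu : u ∈ Set.Icc (-1 : ℝ) 1) => abs_le.mpr hu) _

lemma integral_id_unifInterval : ∫ u, u ∂unifInterval = 0 := by
  rw [unifInterval, integral_smul_measure, integral_Icc_eq_integral_Ioc,
    ← intervalIntegral.integral_of_le (by norm_num), integral_id]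
  norm_num

lemma hasSubgaussianMGF_one_of_abs_le_one {Ω : Type*} [MeasurableSpace Ω] {μ : Measure Ω}
    [IsProbabilityMeasure μ] {X : Ω → ℝ} (hX : AEMeasurable X μ) (hb : ∀ᵐ ω ∂μ, |X ω| ≤ 1)
    (hc : μ[X] = 0) : HasSubgaussianMGF X 1 μ := by
  have h := hasSubgaussianMGF_of_mem_Icc_of_integral_eq_zero hX
    (hb.mono fun ω hω => abs_le.mp hω) hc
  convert h
  norm_num

lemma measureReal_sum_ge_le_pi {ι : Type*} [Fintype ι] {Ω : ι → Type*}
    [∀ i, MeasurableSpace (Ω i)] {μ : ∀ i, Measure (Ω i)} [∀ i, IsProbabilityMeasure (μ i)]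
    {X : ∀ i, Ω i → ℝ} (hX : ∀ i, Measurable (X i)) (hb : ∀ i, ∀ᵐ x ∂μ i, |X i x| ≤ 1)
    (hc : ∀ i, ∫ x, X i x ∂μ i = 0) {ε : ℝ} (hε : 0 ≤ ε) :
    (Measure.pi μ).real {ω | ε ≤ ∑ i, X i (ω i)} ≤ Real.exp (-ε ^ 2 / (2 * Fintype.card ι)) := by
  have hsub : ∀ i ∈ Finset.univ, HasSubgaussianMGF (fun ω : ∀ i, Ω i => X i (ω i)) 1
      (Measure.pi μ) := fun i _ => by
    refine HasSubgaussianMGF.of_map (measurable_pi_apply i).aemeasurable (X := X i) ?_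
    rw [(measurePreserving_eval μ i).map_eq]
    exact hasSubgaussianMGF_one_of_abs_le_one (hX i).aemeasurable (hb i) (hc i)
  simpa using HasSubgaussianMGF.measure_sum_ge_le_of_iIndepFun
    (iIndepFun_pi fun i => (hX i).aemeasurable) hsub hε

noncomputable def minCoord {n : ℕ} (s : Finset (Fin n)) (x : Fin n → ℝ) : ℝ :=
  if h : s.Nonempty then x (s.min' h) else 0

lemma alphaOf_apply {n m : ℕ} (v ω : Fin m → Fin n → ℝ) (ℓ : Fin m) (j : ℤ) :
    alphaOf v ω ℓ j = minCoord (binClass (v ℓ) j) (ω ℓ) := rfl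

@[fun_prop]
lemma measurable_minCoord {n : ℕ} (s : Finset (Fin n)) : Measurable (minCoord s) := by
  unfold minCoord
  split_ifs <;> fun_prop

lemma ae_abs_minCoord_le_one {n : ℕ} (s : Finset (Fin n)) :
    ∀ᵐ x ∂(Measure.pi fun _ : Fin n => unifInterval), |minCoord s x| ≤ 1 := by
  unfold minCoord
  split_ifs with h
  · exact (measurePreserving_eval _ (s.min' h)).quasiMeasurePreserving.ae
      (p := fun u => |u| ≤ 1) ae_abs_le_one_unifInterval
  · simp

lemma integral_minCoord {n : ℕ} (s : Finset (Fin n)) :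
    ∫ x, minCoord s x ∂(Measure.pi fun _ : Fin n => unifInterval) = 0 := by
  unfold minCoord
  split_ifs with h
  · rw [integral_eval, integral_id_unifInterval]
  · simp

/-- For fixed indices `j ℓ`, the coefficient `alphaOf v ω ℓ (j ℓ)` only reads the row `ω ℓ`,
so the summands are independent under the product measure. -/
lemma measureReal_sum_mul_alphaOf_ge_le {n m : ℕ} (v : Fin m → Fin n → ℝ) (w : Fin m → ℝ)
    (hw : ∀ ℓ, |w ℓ| ≤ 1) (j : Fin m → ℤ) {ε : ℝ} (hε : 0 ≤ ε) :
    (Measure.pi fun _ : Fin m => Measure.pi fun _ : Fin n => unifInterval).real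
      {ω | ε ≤ ∑ ℓ, w ℓ * alphaOf v ω ℓ (j ℓ)} ≤ Real.exp (-ε ^ 2 / (2 * m)) := by
  simpa only [alphaOf_apply, Fintype.card_fin] using
    measureReal_sum_ge_le_pi (X := fun ℓ x => w ℓ * minCoord (binClass (v ℓ) (j ℓ)) x)
      (fun ℓ => by fun_prop)
      (fun ℓ => (ae_abs_minCoord_le_one _).mono fun x hx => by
        rw [abs_mul]; exact mul_le_one₀ (hw ℓ) (abs_nonneg _) hx)
      (fun ℓ => by rw [integral_const_mul, integral_minCoord, mul_zero]) hε

lemma measurable_alphaOf {n m : ℕ} (v : Fin m → Fin n → ℝ) : Measurable (alphaOf v) :=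
  measurable_pi_lambda _ fun ℓ => measurable_pi_lambda _ fun _ =>
    (measurable_minCoord _).comp (measurable_pi_apply ℓ)

lemma measure_abs_sum_mul_alphaOf_ge_le {n m : ℕ} (v : Fin m → Fin n → ℝ) (w : Fin m → ℝ)
    (hw : ∀ ℓ, |w ℓ| ≤ 1) (j : Fin m → ℤ) {ε : ℝ} (hε : 0 ≤ ε) :
    (Measure.pi fun _ : Fin m => Measure.pi fun _ : Fin n => unifInterval)
      {ω | ε ≤ |∑ ℓ, w ℓ * alphaOf v ω ℓ (j ℓ)|} ≤
      ENNReal.ofReal (2 * Real.exp (-ε ^ 2 / (2 * m))) := by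
  have hsplit : {ω | ε ≤ |∑ ℓ, w ℓ * alphaOf v ω ℓ (j ℓ)|} ⊆
      {ω | ε ≤ ∑ ℓ, w ℓ * alphaOf v ω ℓ (j ℓ)} ∪ {ω | ε ≤ ∑ ℓ, -w ℓ * alphaOf v ω ℓ (j ℓ)} := by
    intro ω hω
    simpa only [Set.mem_union, Set.mem_ofPred_eq, neg_mul, Finset.sum_neg_distrib] using
      le_abs'.mp hω |>.symm.imp_right fun h => le_neg.mpr h
  have htail (w' : Fin m → ℝ) (hw' : ∀ ℓ, |w' ℓ| ≤ 1) :
      (Measure.pi fun _ : Fin m => Measure.pi fun _ : Fin n => unifInterval)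
        {ω | ε ≤ ∑ ℓ, w' ℓ * alphaOf v ω ℓ (j ℓ)} ≤
        ENNReal.ofReal (Real.exp (-ε ^ 2 / (2 * m))) := by
    rw [← ofReal_measureReal]
    exact ENNReal.ofReal_le_ofReal (measureReal_sum_mul_alphaOf_ge_le v w' hw' j hε)
  calc _ ≤ _ := (measure_mono hsplit).trans (measure_union_le _ _)
    _ ≤ _ := add_le_add (htail w hw) (htail (fun ℓ => -w ℓ) fun ℓ => (abs_neg _).trans_le (hw ℓ))
    _ = _ := by rw [← ENNReal.ofReal_add (by positivity) (by positivity), ← two_mul]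

lemma alphaMeasure_exists_abs_sum_ge_le {n m : ℕ} (v : Fin m → Fin n → ℝ)
    (w : Fin n → Fin m → ℝ) (hw : ∀ k ℓ, |w k ℓ| ≤ 1) (j : Fin n → Fin m → ℤ) {ε : ℝ}
    (hε : 0 ≤ ε) :
    alphaMeasure n m v {a | ∃ k, ε ≤ |∑ ℓ, w k ℓ * a ℓ (j k ℓ)|} ≤
      ENNReal.ofReal (n * (2 * Real.exp (-ε ^ 2 / (2 * m)))) := by
  have hmeas : MeasurableSet {a : Fin m → ℤ → ℝ | ∃ k, ε ≤ |∑ ℓ, w k ℓ * a ℓ (j k ℓ)|} := by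
    simp only [Set.ofPred_exists]
    exact MeasurableSet.iUnion fun k => measurableSet_le measurable_const (by fun_prop)
  rw [alphaMeasure, Measure.map_apply (measurable_alphaOf v) hmeas, Set.preimage_ofPred_eq,
    Set.ofPred_exists, ENNReal.ofReal_mul (Nat.cast_nonneg n), ENNReal.ofReal_natCast]
  calc _ ≤ ∑ k : Fin n, ENNReal.ofReal (2 * Real.exp (-ε ^ 2 / (2 * m))) :=
        (measure_iUnion_fintype_le _ _).trans (Finset.sum_le_sum fun k _ =>
          measure_abs_sum_mul_alphaOf_ge_le v (w k) (hw k) (j k) hε)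
    _ = _ := by simp

lemma mul_two_mul_exp_neg_sq_le {x m : ℝ} (hx : 1 ≤ x) (hm : 0 < m) :
    x * (2 * Real.exp (-(10 * Real.sqrt (m * Real.log x) / 2) ^ 2 / (2 * m))) ≤ 2 / x := by
  have hlog : 0 ≤ Real.log x := Real.log_nonneg hx
  have hexponent :
      -(10 * Real.sqrt (m * Real.log x) / 2) ^ 2 / (2 * m) = -(25 / 2) * Real.log x := by
    rw [div_pow, mul_pow, Real.sq_sqrt (by positivity)]
    field_simp
    ring
  calc _ ≤ x * (2 * Real.exp (-2 * Real.log x)) := by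
        rw [hexponent]; gcongr; nlinarith
    _ = 2 / x := by
        rw [neg_mul, Real.exp_neg, ← Real.log_rpow (by positivity), Real.exp_log (by positivity)]
        field_simp
        norm_cast

theorem stmt_3_general (n m : ℕ) (hn : 2 ≤ n) (hm : 2 ≤ m)
    (v : Fin m → Fin n → ℝ) :
    alphaMeasure n m v {a | ∃ k, 1 / 2 < |biasP n m v a k|} ≤ ENNReal.ofReal (2 / n) := by
  set c := 10 * Real.sqrt (m * Real.log n)
  have hn' : (1 : ℝ) < n := by exact_mod_cast hn
  have hm' : (0 : ℝ) < m := by exact_mod_cast (by omega : 0 < m)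
  have hc : 0 < c := by have := Real.log_pos hn'; positivity
  have hevent : {a | ∃ k, 1 / 2 < |biasP n m v a k|} ⊆ {a | ∃ k, c / 2 ≤
      |∑ ℓ, (2 ^ dyadicIndex (v ℓ k) * v ℓ k) * a ℓ (dyadicIndex (v ℓ k))|} := by
    rintro a ⟨k, hk⟩
    refine ⟨k, ?_⟩
    rw [biasP_apply, abs_mul, abs_inv, abs_of_pos hc, ← div_eq_inv_mul, lt_div_iff₀ hc] at hk
    linarith
  calc _ ≤ _ := measure_mono hevent
    _ ≤ _ := alphaMeasure_exists_abs_sum_ge_le v _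
        (fun k ℓ => abs_zpow_dyadicIndex_mul_le_one (v ℓ k)) _ (by positivity)
    _ ≤ _ := ENNReal.ofReal_le_ofReal (mul_two_mul_exp_neg_sq_le hn'.le hm')

/-- Lemma 2.3: if `n, m ≥ 2` and `v_1, …, v_m ∈ ℝ^n` are unit vectors,
then the random bias vector `P` of Definition 2.2 satisfies `Pr[‖P‖_∞ > 1/2] ≤ 2/n`. -/
theorem stmt_3 (n m : ℕ) (hn : 2 ≤ n) (hm : 2 ≤ m)
    (v : Fin m → Fin n → ℝ) (hv : ∀ ℓ, ∑ i, v ℓ i ^ 2 = 1) :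
    alphaMeasure n m v {a | ∃ k, 1 / 2 < |biasP n m v a k|} ≤ ENNReal.ofReal (2 / n) :=
  stmt_3_general n m hn hm v
end

section
/- Let X and Y be independent real random variables, let α' > 0 with |Y| ≤ α' almost surely, and let 0 < α ≤ α'. Then the Lévy concentration function satisfies Q(α, X + Y) ≤ Q(2α', X) · Q(α, Y). -/
/-!
By independence, the law of `X + Y` is the convolution of the laws of `X` and `Y`, so
`Pr[|X + Y - t| < α] = ∫ Pr[|Y - (t - x)| < α] dP_X(x)`. Each integrand is at most `Q(α, Y)`,
and it vanishes unless `|x - t| < α + α'`, since `|Y| ≤ α'`. Hence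
`Pr[|X + Y - t| < α] ≤ Pr[|X - t| < α + α'] · Q(α, Y) ≤ Q(2α', X) · Q(α, Y)`.
-/

open MeasureTheory

/-- The Lévy concentration function of a random variable `X` on `(Ω, μ)` at level `α`:
`Q(α, X) = sup_t Pr[|X - t| < α]`. -/
noncomputable def levyQ {Ω : Type*} [MeasurableSpace Ω] (μ : Measure Ω) (X : Ω → ℝ)
    (α : ℝ) : ENNReal :=
  ⨆ t : ℝ, μ {ω | |X ω - t| < α}

open Metric Set

section Convolution

variable {E : Type*} [NormedAddCommGroup E] [MeasurableSpace E] {ρ : Measure E} {α β : ℝ}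

lemma measure_preimage_add_ball_le_indicator (hρ : ∀ᵐ y ∂ρ, ‖y‖ ≤ β) (t x : E) :
    ρ ((x + ·) ⁻¹' ball t α) ≤
      (ball t (α + β)).indicator (fun _ ↦ ⨆ s, ρ (ball s α)) x := by
  rw [preimage_add_ball]
  by_cases hx : x ∈ ball t (α + β)
  · rw [indicator_of_mem hx]
    exact le_iSup (fun s ↦ ρ (ball s α)) (t - x)
  · refine le_of_eq_of_le (measure_mono_null (fun y hy ↦ ?_) (ae_iff.mp hρ)) zero_le
    intro hyβ
    rw [mem_ball, dist_eq_norm] at hy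
    refine hx ?_
    calc dist x t = ‖y - (t - x) - y‖ := by rw [dist_eq_norm]; abel_nf
      _ ≤ ‖y - (t - x)‖ + ‖y‖ := norm_sub_le _ _
      _ < α + β := by linarith

lemma conv_apply_ball_le [OpensMeasurableSpace E] [MeasurableAdd₂ E] (ν ρ : Measure E)
    [SFinite ρ] (hρ : ∀ᵐ y ∂ρ, ‖y‖ ≤ β) (t : E) :
    (ν ∗ ρ) (ball t α) ≤ ν (ball t (α + β)) * ⨆ s, ρ (ball s α) := by
  have hs : MeasurableSet ((fun p : E × E ↦ p.1 + p.2) ⁻¹' ball t α) :=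
    measurable_add measurableSet_ball
  calc (ν ∗ ρ) (ball t α) = ∫⁻ x, ρ ((x + ·) ⁻¹' ball t α) ∂ν := by
        rw [Measure.conv, Measure.map_apply measurable_add measurableSet_ball,
          Measure.prod_apply hs]
        rfl
    _ ≤ ∫⁻ x, (ball t (α + β)).indicator (fun _ ↦ ⨆ s, ρ (ball s α)) x ∂ν :=
        lintegral_mono (measure_preimage_add_ball_le_indicator hρ t)
    _ = ν (ball t (α + β)) * ⨆ s, ρ (ball s α) := by
        rw [lintegral_indicator_const measurableSet_ball, mul_comm]

end Convolution

section LevyConcentration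

variable {Ω : Type*} [MeasurableSpace Ω] {μ : Measure Ω} {X Y : Ω → ℝ} {α β : ℝ}

@[gcongr]
lemma levyQ_mono (hαβ : α ≤ β) : levyQ μ X α ≤ levyQ μ X β :=
  iSup_mono fun _ ↦ measure_mono fun _ hω ↦ lt_of_lt_of_le hω hαβ

lemma levyQ_eq_iSup_map_ball (hX : Measurable X) :
    levyQ μ X α = ⨆ t, μ.map X (ball t α) := by
  simp_rw [Measure.map_apply hX measurableSet_ball]
  rfl

lemma levyQ_add_le_of_indepFun [IsFiniteMeasure μ] (hX : Measurable X) (hY : Measurable Y)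
    (hXY : ProbabilityTheory.IndepFun X Y μ) (hYβ : ∀ᵐ ω ∂μ, |Y ω| ≤ β) :
    levyQ μ (X + Y) α ≤ levyQ μ X (α + β) * levyQ μ Y α := by
  have hYβ' : ∀ᵐ y ∂μ.map Y, ‖y‖ ≤ β :=
    (ae_map_iff hY.aemeasurable (measurableSet_le measurable_norm measurable_const)).2 hYβ
  rw [levyQ_eq_iSup_map_ball (hX.add hY), levyQ_eq_iSup_map_ball hX,
    levyQ_eq_iSup_map_ball hY, hXY.map_add_eq_map_conv_map hX hY, iSup_le_iff]
  intro t
  calc (μ.map X ∗ μ.map Y) (ball t α)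
      ≤ μ.map X (ball t (α + β)) * ⨆ s, μ.map Y (ball s α) :=
        conv_apply_ball_le _ _ hYβ' t
    _ ≤ (⨆ t, μ.map X (ball t (α + β))) * ⨆ s, μ.map Y (ball s α) := by
        gcongr
        exact le_iSup (fun t ↦ μ.map X (ball t (α + β))) t

end LevyConcentration

theorem stmt_9_general {Ω : Type*} [MeasurableSpace Ω] (μ : Measure Ω) [IsProbabilityMeasure μ]
    (X Y : Ω → ℝ) (hX : Measurable X) (hY : Measurable Y)
    (hindep : ProbabilityTheory.IndepFun X Y μ)
    (α' : ℝ) (hYbound : ∀ᵐ ω ∂μ, |Y ω| ≤ α')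
    (α : ℝ) (hαα' : α ≤ α') :
    levyQ μ (fun ω => X ω + Y ω) α ≤ levyQ μ X (2 * α') * levyQ μ Y α :=
  calc levyQ μ (fun ω => X ω + Y ω) α ≤ levyQ μ X (α + α') * levyQ μ Y α :=
        levyQ_add_le_of_indepFun hX hY hindep hYbound
    _ ≤ levyQ μ X (2 * α') * levyQ μ Y α := by gcongr; linarith

/-- if `X` and `Y` are independent real random variables, `|Y| ≤ α'` almost
surely, and `0 < α ≤ α'`, then `Q(α, X + Y) ≤ Q(2α', X) · Q(α, Y)`. -/
theorem stmt_9 {Ω : Type*} [MeasurableSpace Ω] (μ : Measure Ω) [IsProbabilityMeasure μ]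
    (X Y : Ω → ℝ) (hX : Measurable X) (hY : Measurable Y)
    (hindep : ProbabilityTheory.IndepFun X Y μ)
    (α' : ℝ) (hα' : 0 < α') (hYbound : ∀ᵐ ω ∂μ, |Y ω| ≤ α')
    (α : ℝ) (hα : 0 < α) (hαα' : α ≤ α') :
    levyQ μ (fun ω => X ω + Y ω) α ≤ levyQ μ X (2 * α') * levyQ μ Y α :=
  stmt_9_general μ X Y hX hY hindep α' hYbound α hαα'
end
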